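/- arXiv:1703.01700 — 9 statements merged into one kernel-verified Lean document; each statement's English description precedes it below -/
import Mathlib

section
/- Let f : (X,κ) ⊸ (Y,λ) and g : (Y,λ) ⊸ (W,μ) be multivalued functions between digital images. If f and g are both strongly continuous, then the composition g ∘ f : (X,κ) ⊸ (W,μ), defined by (g ∘ f)(x) = ⋃_{y ∈ f(x)} g(y), is strongly continuous. -/
/-- `a ⩦ b` : `a = b` or `a`, `b` are adjacent. -/
def AdjEq {α : Type*} (adj : α → α → Prop) (a b : α) : Prop := a = b ∨ adj a b

/-- `A` and `B` are adjacent sets: some point of `A` is equal or adjacent to some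
point of `B`. -/
def AdjSets {α : Type*} (adj : α → α → Prop) (A B : Set α) : Prop :=
  ∃ a ∈ A, ∃ b ∈ B, AdjEq adj a b

/-- A subset `A` of a digital image is connected: any two of its points are joined by a
path of consecutively adjacent points lying in `A`. -/
def ConnectedIn {α : Type*} (adj : α → α → Prop) (A : Set α) : Prop :=
  ∀ a ∈ A, ∀ b ∈ A, ∃ (m : ℕ) (y : ℕ → α), y 0 = a ∧ y m = b ∧
    (∀ i ≤ m, y i ∈ A) ∧ ∀ i < m, adj (y i) (y (i + 1))

/-- Image of a set under a multivalued function: `F(A) = ⋃_{x ∈ A} F(x)`. -/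
def mImage {α β : Type*} (F : α → Set β) (A : Set α) : Set β := ⋃ x ∈ A, F x

/-- Weak continuity of a multivalued function. -/
def WeaklyContinuous {α β : Type*} (adjX : α → α → Prop) (adjY : β → β → Prop)
    (F : α → Set β) : Prop :=
  ∀ x x', adjX x x' → AdjSets adjY (F x) (F x')

/-- Strong continuity of a multivalued function. -/
def StronglyContinuous {α β : Type*} (adjX : α → α → Prop) (adjY : β → β → Prop)
    (F : α → Set β) : Prop :=
  ∀ x x', adjX x x' →
    (∀ y ∈ F x, ∃ y' ∈ F x', AdjEq adjY y y') ∧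
    (∀ y' ∈ F x', ∃ y ∈ F x, AdjEq adjY y y')

/-- A multivalued function is connectivity preserving if the image of each connected
set is connected. -/
def ConnPreserving {α β : Type*} (adjX : α → α → Prop) (adjY : β → β → Prop)
    (F : α → Set β) : Prop :=
  ∀ A : Set α, ConnectedIn adjX A → ConnectedIn adjY (mImage F A)

/-- A multivalued function is a surjection if every point of the codomain lies in some
point image. -/
def MSurjective {α β : Type*} (F : α → Set β) : Prop := ∀ y, ∃ x, y ∈ F x

/-! Match `w ∈ g y`, `y ∈ f x` first by some `y' ∈ f x'` with `y ⩦ y'`, then by some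
`w' ∈ g y'` with `w ⩦ w'`. Since `y ⩦ y'` may be an equality, strong continuity of `g` is
used in its form for `⩦`-related points rather than adjacent ones. -/

namespace StronglyContinuous

variable {α β : Type*} {adjX : α → α → Prop} {adjY : β → β → Prop} {F : α → Set β}
  {x x' : α}

theorem exists_adjEq_of_mem_left (hF : StronglyContinuous adjX adjY F) (hx : AdjEq adjX x x')
    {y : β} (hy : y ∈ F x) : ∃ y' ∈ F x', AdjEq adjY y y' := by
  rcases hx with rfl | hx
  · exact ⟨y, hy, Or.inl rfl⟩
  · exact (hF x x' hx).1 y hy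

theorem exists_adjEq_of_mem_right (hF : StronglyContinuous adjX adjY F) (hx : AdjEq adjX x x')
    {y' : β} (hy' : y' ∈ F x') : ∃ y ∈ F x, AdjEq adjY y y' := by
  rcases hx with rfl | hx
  · exact ⟨y', hy', Or.inl rfl⟩
  · exact (hF x x' hx).2 y' hy'

end StronglyContinuous

theorem comp_strongly_continuous_general {X Y W : Type*}
    (κ : X → X → Prop) (lam : Y → Y → Prop) (μ : W → W → Prop)
    (f : X → Set Y) (g : Y → Set W)
    (hf : StronglyContinuous κ lam f) (hg : StronglyContinuous lam μ g) :
    StronglyContinuous κ μ (fun x => ⋃ y ∈ f x, g y) := by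
  intro x x' hxx'
  simp only [Set.mem_iUnion₂]
  constructor
  · rintro w ⟨y, hy, hw⟩
    obtain ⟨y', hy', hyy'⟩ := (hf x x' hxx').1 y hy
    obtain ⟨w', hw', hww'⟩ := hg.exists_adjEq_of_mem_left hyy' hw
    exact ⟨w', ⟨y', hy', hw'⟩, hww'⟩
  · rintro w' ⟨y', hy', hw'⟩
    obtain ⟨y, hy, hyy'⟩ := (hf x x' hxx').2 y' hy'
    obtain ⟨w, hw, hww'⟩ := hg.exists_adjEq_of_mem_right hyy' hw'
    exact ⟨w, ⟨y, hy, hw⟩, hww'⟩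

/-- the composition of strongly continuous multivalued functions is
strongly continuous. -/
theorem comp_strongly_continuous {X Y W : Type*}
    (κ : X → X → Prop) (lam : Y → Y → Prop) (μ : W → W → Prop)
    (hκs : Symmetric κ) (hκi : Irreflexive κ)
    (hls : Symmetric lam) (hli : Irreflexive lam)
    (hμs : Symmetric μ) (hμi : Irreflexive μ)
    (f : X → Set Y) (g : Y → Set W)
    (hf : StronglyContinuous κ lam f) (hg : StronglyContinuous lam μ g) :
    StronglyContinuous κ μ (fun x => ⋃ y ∈ f x, g y) :=
  comp_strongly_continuous_general κ lam μ f g hf hg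
end

section
/- Let A ⊆ X ⊆ ℤ^m, both carrying the c_u-adjacency. Then there is a continuous multivalued retraction R : X ⊸ A if and only if for every n ≥ 1, every 1 ≤ v ≤ n, every Y ⊆ ℤ^n with the c_v-adjacency, and every continuous single-valued function f : (A,c_u) → (Y,c_v), there is a continuous multivalued function F : (X,c_u) ⊸ (Y,c_v) that extends f, i.e., F(a) = {f(a)} for all a ∈ A. -/
/-- `c_u`-adjacency on `ℤ^n`: the points are distinct, at most `u` coordinates differ,
and every differing coordinate differs by exactly 1. -/
def cuAdj {n : ℕ} (u : ℕ) (x y : Fin n → ℤ) : Prop :=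
  x ≠ y ∧ (Finset.univ.filter fun i => x i ≠ y i).card ≤ u ∧
    ∀ i, x i ≠ y i → |x i - y i| = 1

/-- Representation of the `r`-th subdivision `S(X,r)` of `X ⊆ ℤ^n`. -/
def Sdiv {n : ℕ} (X : Set (Fin n → ℤ)) (r : ℤ) : Set (Fin n → ℤ) :=
  {z | (fun i => (z i).fdiv r) ∈ X}

/-- The natural map `E_r : S(X,r) → X`. -/
def Er {n : ℕ} (r : ℤ) (z : Fin n → ℤ) : Fin n → ℤ := fun i => (z i).fdiv r

/-- Continuity of a single-valued function `f : (X,c_u) → (Y,c_v)`. -/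
def SContinuous {m n : ℕ} (u v : ℕ) (X : Set (Fin m → ℤ)) (Y : Set (Fin n → ℤ))
    (f : (Fin m → ℤ) → Fin n → ℤ) : Prop :=
  (∀ x ∈ X, f x ∈ Y) ∧
    ∀ x ∈ X, ∀ x' ∈ X, cuAdj u x x' → AdjEq (cuAdj v) (f x) (f x')

/-- Continuity of a multivalued function `F : (X,c_u) ⊸ (Y,c_v)`: `F` is generated by a
continuous single-valued function on some subdivision `S(X,r)`, `r ≥ 1`. -/
def MContinuous {m n : ℕ} (u v : ℕ) (X : Set (Fin m → ℤ)) (Y : Set (Fin n → ℤ))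
    (F : (Fin m → ℤ) → Set (Fin n → ℤ)) : Prop :=
  ∃ r : ℤ, 1 ≤ r ∧ ∃ f : (Fin m → ℤ) → Fin n → ℤ,
    SContinuous u v (Sdiv X r) Y f ∧
    ∀ x ∈ X, F x = f '' {z | z ∈ Sdiv X r ∧ Er r z = x}


/-
A retraction `R` of `X` onto `A` turns every continuous `f : A → Y` into the extension
`x ↦ f(R x)`: post-composing the single-valued generator of `R` on a subdivision of `X` with `f`
generates it. Conversely, extending the identity of `A` (with `Y = A`, `n = m`, `v = u`) gives
a retraction.
-/

theorem SContinuous.comp {l m n : ℕ} {u v w : ℕ} {X : Set (Fin l → ℤ)} {Y : Set (Fin m → ℤ)}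
    {Z : Set (Fin n → ℤ)} {f : (Fin m → ℤ) → Fin n → ℤ} {g : (Fin l → ℤ) → Fin m → ℤ}
    (hf : SContinuous v w Y Z f) (hg : SContinuous u v X Y g) :
    SContinuous u w X Z (f ∘ g) := by
  refine ⟨fun x hx => hf.1 _ (hg.1 x hx), fun x hx x' hx' hadj => ?_⟩
  rcases hg.2 x hx x' hx' hadj with heq | hgadj
  · exact Or.inl (congrArg f heq)
  · exact hf.2 _ (hg.1 x hx) _ (hg.1 x' hx') hgadj

theorem SContinuous.id {m : ℕ} (u : ℕ) (X : Set (Fin m → ℤ)) : SContinuous u u X X id :=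
  ⟨fun _ hx => hx, fun _ _ _ _ hadj => Or.inr hadj⟩

theorem MContinuous.image_sContinuous {l m n : ℕ} {u v w : ℕ} {X : Set (Fin l → ℤ)}
    {Y : Set (Fin m → ℤ)} {Z : Set (Fin n → ℤ)} {G : (Fin l → ℤ) → Set (Fin m → ℤ)}
    {f : (Fin m → ℤ) → Fin n → ℤ} (hG : MContinuous u v X Y G) (hf : SContinuous v w Y Z f) :
    MContinuous u w X Z (fun x => f '' G x) := by
  obtain ⟨r, hr, g, hg, hGg⟩ := hG
  exact ⟨r, hr, f ∘ g, hf.comp hg, fun x hx => by simp only [hGg x hx, Set.image_comp]⟩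

theorem continuous_multivalued_retraction_iff_extension_general
    {m : ℕ} (u : ℕ) (hu1 : 1 ≤ u) (hum : u ≤ m)
    (X A : Set (Fin m → ℤ)) :
    (∃ R : (Fin m → ℤ) → Set (Fin m → ℤ),
        MContinuous u u X A R ∧ ∀ a ∈ A, R a = {a}) ↔
    (∀ n : ℕ, 1 ≤ n → ∀ v : ℕ, 1 ≤ v → v ≤ n → ∀ Y : Set (Fin n → ℤ),
      ∀ f : (Fin m → ℤ) → Fin n → ℤ, SContinuous u v A Y f →
        ∃ F : (Fin m → ℤ) → Set (Fin n → ℤ),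
          MContinuous u v X Y F ∧ ∀ a ∈ A, F a = {f a}) := by
  constructor
  · rintro ⟨R, hR, hRA⟩ n - v - - Y f hf
    exact ⟨fun x => f '' R x, hR.image_sContinuous hf,
      fun a ha => by simp only [hRA a ha, Set.image_singleton]⟩
  · intro hext
    exact hext m (hu1.trans hum) u hu1 hum A id (SContinuous.id u A)

/-- for `A ⊆ X ⊆ ℤ^m` with the `c_u`-adjacency, there is a continuous
multivalued retraction `R : X ⊸ A` if and only if every continuous single-valued
function `f : (A,c_u) → (Y,c_v)` extends to a continuous multivalued function
`F : (X,c_u) ⊸ (Y,c_v)`. -/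
theorem continuous_multivalued_retraction_iff_extension
    {m : ℕ} (u : ℕ) (hu1 : 1 ≤ u) (hum : u ≤ m)
    (X A : Set (Fin m → ℤ)) (hAX : A ⊆ X) :
    (∃ R : (Fin m → ℤ) → Set (Fin m → ℤ),
        MContinuous u u X A R ∧ ∀ a ∈ A, R a = {a}) ↔
    (∀ n : ℕ, 1 ≤ n → ∀ v : ℕ, 1 ≤ v → v ≤ n → ∀ Y : Set (Fin n → ℤ),
      ∀ f : (Fin m → ℤ) → Fin n → ℤ, SContinuous u v A Y f →
        ∃ F : (Fin m → ℤ) → Set (Fin n → ℤ),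
          MContinuous u v X Y F ∧ ∀ a ∈ A, F a = {f a}) :=
  continuous_multivalued_retraction_iff_extension_general u hu1 hum X A
end

section
/- Let (X,κ) and (Y,λ) be nonempty digital images such that there exists a surjection from the set of κ-components of X onto the set of λ-components of Y. Then there is a multivalued function F : (X,κ) ⊸ (Y,λ) that is strongly continuous, connectivity preserving, and a surjection. -/
/-- `a` and `b` are joined by a path of consecutively adjacent points. -/
def Reaches {α : Type*} (adj : α → α → Prop) (a b : α) : Prop :=
  ∃ (m : ℕ) (y : ℕ → α), y 0 = a ∧ y m = b ∧ ∀ i < m, adj (y i) (y (i + 1))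

/-- The set of components of a digital image: equivalence classes of the relation
"joined by a path". -/
def components {α : Type*} (adj : α → α → Prop) : Set (Set α) :=
  {C | ∃ x, C = {x' | Reaches adj x x'}}

/-!
Send `x` to the component `s [x]` of `Y`, where `[x]` is the component of `x` and `s` is the given
surjection of components. This `F` is constant along paths, so adjacent points have equal images
(strong continuity), a connected set `A` has as image the single component `F a` for any `a ∈ A`
(connectivity), and every component of `Y` is some `s [x]` (surjectivity).
-/

section Components

variable {α : Type*} {adj : α → α → Prop}

theorem reaches_iff_reflTransGen {a b : α} :
    Reaches adj a b ↔ Relation.ReflTransGen adj a b := by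
  constructor
  · rintro ⟨m, y, rfl, rfl, hy⟩
    suffices ∀ i ≤ m, Relation.ReflTransGen adj (y 0) (y i) from this m le_rfl
    intro i hi
    induction i with
    | zero => exact .refl
    | succ i ih => exact (ih (by omega)).tail (hy i hi)
  · intro h
    induction h using Relation.ReflTransGen.head_induction_on with
    | refl => exact ⟨0, fun _ => b, rfl, rfl, by simp⟩
    | @head a c hac _ ih =>
      obtain ⟨m, y, hy0, hym, hy⟩ := ih
      refine ⟨m + 1, fun | 0 => a | i + 1 => y i, rfl, hym, ?_⟩
      rintro (_ | i) hi
      · simpa [hy0] using hac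
      · exact hy i (by omega)

theorem Reaches.refl (a : α) : Reaches adj a a :=
  reaches_iff_reflTransGen.2 .refl

theorem Reaches.trans {a b c : α} (hab : Reaches adj a b) (hbc : Reaches adj b c) :
    Reaches adj a c :=
  reaches_iff_reflTransGen.2
    ((reaches_iff_reflTransGen.1 hab).trans (reaches_iff_reflTransGen.1 hbc))

theorem Reaches.symm [Std.Symm adj] {a b : α} (h : Reaches adj a b) : Reaches adj b a :=
  reaches_iff_reflTransGen.2 (Std.Symm.symm _ _ (reaches_iff_reflTransGen.1 h))

theorem Reaches.of_adj {a b : α} (h : adj a b) : Reaches adj a b :=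
  reaches_iff_reflTransGen.2 (.single h)

theorem ConnectedIn.reaches {A : Set α} (hA : ConnectedIn adj A) {a b : α} (ha : a ∈ A)
    (hb : b ∈ A) : Reaches adj a b :=
  let ⟨m, y, hy0, hym, _, hy⟩ := hA a ha b hb
  ⟨m, y, hy0, hym, hy⟩

theorem connectedIn_of_mem_components [Std.Symm adj] {C : Set α}
    (hC : C ∈ components adj) : ConnectedIn adj C := by
  obtain ⟨x, rfl⟩ := hC
  intro a ha b hb
  obtain ⟨m, y, hy0, hym, hy⟩ := ha.symm.trans hb
  refine ⟨m, y, hy0, hym, fun i hi => ha.trans ⟨i, y, hy0, rfl, fun j hj => hy j (by omega)⟩, hy⟩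

variable (adj) in
def componentOf (x : α) : components adj := ⟨{x' | Reaches adj x x'}, x, rfl⟩

theorem mem_componentOf_self (x : α) : x ∈ (componentOf adj x : Set α) :=
  Reaches.refl x

theorem exists_componentOf_eq (C : components adj) : ∃ x, componentOf adj x = C :=
  let ⟨x, hx⟩ := C.2
  ⟨x, Subtype.ext hx.symm⟩

theorem componentOf_eq_of_reaches [Std.Symm adj] {x x' : α} (h : Reaches adj x x') :
    componentOf adj x = componentOf adj x' :=
  Subtype.ext <| Set.ext fun _ => ⟨h.symm.trans, h.trans⟩

end Components

section PathInvariant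

variable {α β : Type*} {adjX : α → α → Prop} {adjY : β → β → Prop} {F : α → Set β}

theorem StronglyContinuous.of_reaches_eq (hF : ∀ x x', Reaches adjX x x' → F x = F x') :
    StronglyContinuous adjX adjY F := by
  intro x x' h
  rw [hF x x' (.of_adj h)]
  exact ⟨fun y hy => ⟨y, hy, Or.inl rfl⟩, fun y hy => ⟨y, hy, Or.inl rfl⟩⟩

theorem ConnPreserving.of_reaches_eq (hF : ∀ x x', Reaches adjX x x' → F x = F x')
    (hconn : ∀ x, ConnectedIn adjY (F x)) : ConnPreserving adjX adjY F := by
  intro A hA a ha b hb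
  simp only [mImage, Set.mem_iUnion] at ha hb
  obtain ⟨x, hx, hax⟩ := ha
  obtain ⟨x', hx', hbx'⟩ := hb
  have hbx : b ∈ F x := hF x x' (hA.reaches hx hx') ▸ hbx'
  obtain ⟨m, y, hy0, hym, hyF, hy⟩ := hconn x a hax b hbx
  exact ⟨m, y, hy0, hym, fun i hi => Set.mem_biUnion hx (hyF i hi), hy⟩

end PathInvariant

theorem exists_strongly_continuous_connectivity_preserving_surjection_general
    {X Y : Type*}
    (κ : X → X → Prop) (lam : Y → Y → Prop)
    (hκs : Symmetric κ)
    (hls : Symmetric lam)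
    (hsurj : ∃ s : components κ → components lam, Function.Surjective s) :
    ∃ F : X → Set Y,
      StronglyContinuous κ lam F ∧ ConnPreserving κ lam F ∧ MSurjective F := by
  have : Std.Symm κ := ⟨fun _ _ h => hκs h⟩
  have : Std.Symm lam := ⟨fun _ _ h => hls h⟩
  obtain ⟨s, hs⟩ := hsurj
  let F : X → Set Y := fun x => s (componentOf κ x)
  have hF : ∀ x x', Reaches κ x x' → F x = F x' := fun x x' h => by
    simp only [F, componentOf_eq_of_reaches h]
  refine ⟨F, .of_reaches_eq hF,
    .of_reaches_eq hF fun x => connectedIn_of_mem_components (s _).2, fun y => ?_⟩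
  obtain ⟨C, hC⟩ := hs (componentOf lam y)
  obtain ⟨x, rfl⟩ := exists_componentOf_eq C
  exact ⟨x, show y ∈ (s (componentOf κ x) : Set Y) from hC ▸ mem_componentOf_self y⟩

/-- if there is a surjection from the set of `κ`-components of `X` onto the
set of `λ`-components of `Y`, then there is a strongly continuous, connectivity
preserving multivalued surjection `F : X ⊸ Y`. -/
theorem exists_strongly_continuous_connectivity_preserving_surjection
    {X Y : Type*} [Nonempty X] [Nonempty Y]
    (κ : X → X → Prop) (lam : Y → Y → Prop)
    (hκs : Symmetric κ) (hκi : Irreflexive κ)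
    (hls : Symmetric lam) (hli : Irreflexive lam)
    (hsurj : ∃ s : components κ → components lam, Function.Surjective s) :
    ∃ F : X → Set Y,
      StronglyContinuous κ lam F ∧ ConnPreserving κ lam F ∧ MSurjective F :=
  exists_strongly_continuous_connectivity_preserving_surjection_general κ lam hκs hls hsurj
end

section
/- Let (X,κ) be a connected digital image and let A be a nonempty subset of X. Then the multivalued function f : X ⊸ A defined by f(x) = {x} if x ∈ A, and f(x) = L_A^κ(x,X) if x ∈ X \ A, is a weakly continuous retraction. -/
/-- `l_X^κ(x,A)`: the length of a shortest `κ`-path in `X` from `x` to a point of `A`. -/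
noncomputable def distToSet {α : Type*} (adj : α → α → Prop) (A : Set α) (x : α) : ℕ :=
  sInf {m : ℕ | ∃ y : ℕ → α, y 0 = x ∧ y m ∈ A ∧ ∀ i < m, adj (y i) (y (i + 1))}

/-- `L_A^κ(x,X)`: the set of points `a ∈ A` joined to `x` by a `κ`-path in `X` of length
`l_X^κ(x,A)` or `l_X^κ(x,A) + 1`. -/
noncomputable def Lset {α : Type*} (adj : α → α → Prop) (A : Set α) (x : α) : Set α :=
  {a | a ∈ A ∧ ∃ (m : ℕ) (y : ℕ → α),
    (m = distToSet adj A x ∨ m = distToSet adj A x + 1) ∧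
    y 0 = x ∧ y m = a ∧ ∀ i < m, adj (y i) (y (i + 1))}


/-!
If `x` and `x'` are adjacent and `l(x') ≤ l(x)`, prepending `x` to a shortest path from `x'`
to `A` gives a path from `x` of length `l(x') + 1 ∈ {l(x), l(x) + 1}`, so the endpoint of that
shortest path lies in both `f(x')` and `f(x)`. When `x ∈ A` instead, `l(x') = 0` forces
`x' ∈ A`, and the images `{x}`, `{x'}` are adjacent.
-/

section Walks

variable {α : Type*} {adj : α → α → Prop}

def HasWalk (adj : α → α → Prop) (x a : α) (m : ℕ) : Prop :=
  ∃ y : ℕ → α, y 0 = x ∧ y m = a ∧ ∀ i < m, adj (y i) (y (i + 1))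

theorem hasWalk_zero_iff {x a : α} : HasWalk adj x a 0 ↔ x = a := by
  constructor
  · rintro ⟨y, hy0, hya, -⟩
    exact hy0.symm.trans hya
  · rintro rfl
    exact ⟨fun _ => x, rfl, rfl, fun _ hi => absurd hi (Nat.not_lt_zero _)⟩

theorem HasWalk.cons {x x' a : α} {m : ℕ} (hadj : adj x x') (hw : HasWalk adj x' a m) :
    HasWalk adj x a (m + 1) := by
  obtain ⟨y, hy0, hya, hy⟩ := hw
  refine ⟨fun n => Nat.casesOn n x y, rfl, hya, ?_⟩
  rintro (_ | i) hi
  · change adj x (y 0)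
    exact hy0 ▸ hadj
  · exact hy i (Nat.lt_of_succ_lt_succ hi)

theorem ConnectedIn.exists_hasWalk (h : ConnectedIn adj (Set.univ : Set α)) (x a : α) :
    ∃ m, HasWalk adj x a m := by
  obtain ⟨m, y, hy0, hya, -, hy⟩ := h x trivial a trivial
  exact ⟨m, y, hy0, hya, hy⟩

theorem AdjSets.symm (hs : Symmetric adj) {B C : Set α} (h : AdjSets adj B C) :
    AdjSets adj C B := by
  obtain ⟨b, hb, c, hc, rfl | hbc⟩ := h
  · exact ⟨b, hc, b, hb, Or.inl rfl⟩
  · exact ⟨c, hc, b, hb, Or.inr (hs hbc)⟩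

end Walks

section DistToSet

variable {α : Type*} {adj : α → α → Prop} {A : Set α} {x : α}

theorem distToSet_le {a : α} {m : ℕ} (ha : a ∈ A) (hw : HasWalk adj x a m) :
    distToSet adj A x ≤ m := by
  obtain ⟨y, hy0, rfl, hy⟩ := hw
  exact Nat.sInf_le ⟨y, hy0, ha, hy⟩

theorem exists_hasWalk_distToSet (hreach : ∃ a ∈ A, ∃ m, HasWalk adj x a m) :
    ∃ a ∈ A, HasWalk adj x a (distToSet adj A x) := by
  obtain ⟨a, ha, m, y, hy0, rfl, hy⟩ := hreach
  obtain ⟨z, hz0, hzA, hz⟩ : distToSet adj A x ∈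
      {m : ℕ | ∃ y : ℕ → α, y 0 = x ∧ y m ∈ A ∧ ∀ i < m, adj (y i) (y (i + 1))} :=
    Nat.sInf_mem ⟨m, y, hy0, ha, hy⟩
  exact ⟨_, hzA, z, hz0, rfl, hz⟩

theorem distToSet_eq_zero_of_mem (hx : x ∈ A) : distToSet adj A x = 0 :=
  Nat.le_zero.mp (distToSet_le hx (hasWalk_zero_iff.mpr rfl))

theorem mem_of_distToSet_eq_zero (hreach : ∃ a ∈ A, ∃ m, HasWalk adj x a m)
    (h : distToSet adj A x = 0) : x ∈ A := by
  obtain ⟨a, ha, hw⟩ := exists_hasWalk_distToSet hreach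
  rw [h, hasWalk_zero_iff] at hw
  exact hw ▸ ha

theorem Lset_subset : Lset adj A x ⊆ A := fun _ ha => ha.1

theorem mem_Lset_of_hasWalk {a : α} {m : ℕ} (ha : a ∈ A)
    (hm : m = distToSet adj A x ∨ m = distToSet adj A x + 1) (hw : HasWalk adj x a m) :
    a ∈ Lset adj A x := by
  obtain ⟨y, hy0, hya, hy⟩ := hw
  exact ⟨ha, m, y, hm, hy0, hya, hy⟩

theorem mem_Lset_of_adj_of_distToSet_le {x' a : α} (hadj : adj x x')
    (hle : distToSet adj A x' ≤ distToSet adj A x) (ha : a ∈ A)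
    (hw : HasWalk adj x' a (distToSet adj A x')) : a ∈ Lset adj A x := by
  have hw' := hw.cons hadj
  have hle' := distToSet_le ha hw'
  exact mem_Lset_of_hasWalk ha (by omega) hw'

end DistToSet

theorem adjSets_of_adj_of_distToSet_le {α : Type*} {adj : α → α → Prop} {A : Set α}
    {f : α → Set α} (hfA : ∀ x ∈ A, f x = {x}) (hfX : ∀ x ∉ A, f x = Lset adj A x)
    {x x' : α} (hreach : ∃ a ∈ A, ∃ m, HasWalk adj x' a m) (hadj : adj x x')
    (hle : distToSet adj A x' ≤ distToSet adj A x) : AdjSets adj (f x) (f x') := by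
  by_cases hx : x ∈ A
  · have hx' : x' ∈ A := mem_of_distToSet_eq_zero hreach
      (Nat.le_zero.mp (distToSet_eq_zero_of_mem (adj := adj) hx ▸ hle))
    exact ⟨x, by simp [hfA x hx], x', by simp [hfA x' hx'], Or.inr hadj⟩
  obtain ⟨a, ha, hw⟩ := exists_hasWalk_distToSet hreach
  have hax : a ∈ f x := hfX x hx ▸ mem_Lset_of_adj_of_distToSet_le hadj hle ha hw
  have hax' : a ∈ f x' := by
    by_cases hx' : x' ∈ A
    · rw [distToSet_eq_zero_of_mem hx', hasWalk_zero_iff] at hw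
      rw [hfA x' hx', ← hw]
      exact Set.mem_singleton x'
    · exact hfX x' hx' ▸ mem_Lset_of_hasWalk ha (Or.inl rfl) hw
  exact ⟨a, hax, a, hax', Or.inl rfl⟩

theorem nearest_point_weakly_continuous_retraction_general {X : Type*}
    (κ : X → X → Prop) (hκs : Symmetric κ)
    (hconn : ConnectedIn κ (Set.univ : Set X))
    (A : Set X) (hA : A.Nonempty)
    (f : X → Set X)
    (hfA : ∀ x ∈ A, f x = {x})
    (hfX : ∀ x ∉ A, f x = Lset κ A x) :
    (∀ x, f x ⊆ A) ∧ (∀ a ∈ A, f a = {a}) ∧ WeaklyContinuous κ κ f := by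
  have hreach : ∀ x, ∃ a ∈ A, ∃ m, HasWalk κ x a m := fun x =>
    ⟨hA.some, hA.some_mem, hconn.exists_hasWalk x hA.some⟩
  refine ⟨fun x => ?_, hfA, fun x x' hadj => ?_⟩
  · by_cases hx : x ∈ A
    · simpa [hfA x hx] using hx
    · exact hfX x hx ▸ Lset_subset
  · rcases le_total (distToSet κ A x') (distToSet κ A x) with hle | hle
    · exact adjSets_of_adj_of_distToSet_le hfA hfX (hreach x') hadj hle
    · exact (adjSets_of_adj_of_distToSet_le hfA hfX (hreach x) (hκs hadj) hle).symm hκs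

/-- in a connected digital image `(X,κ)` with `∅ ≠ A ⊆ X`, the multivalued
function `f(x) = {x}` for `x ∈ A` and `f(x) = L_A^κ(x,X)` for `x ∉ A` is a weakly
continuous retraction `X ⊸ A`. -/
theorem nearest_point_weakly_continuous_retraction {X : Type*}
    (κ : X → X → Prop) (hκs : Symmetric κ) (hκi : Irreflexive κ)
    (hconn : ConnectedIn κ (Set.univ : Set X))
    (A : Set X) (hA : A.Nonempty)
    (f : X → Set X)
    (hfA : ∀ x ∈ A, f x = {x})
    (hfX : ∀ x ∉ A, f x = Lset κ A x) :
    (∀ x, f x ⊆ A) ∧ (∀ a ∈ A, f a = {a}) ∧ WeaklyContinuous κ κ f :=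
  nearest_point_weakly_continuous_retraction_general κ hκs hconn A hA f hfA hfX
end

section
/- Let (X,κ) be a connected digital image and let A be a nonempty subset of X. Then the multivalued function g : X ⊸ A defined by g(x) = {x} if x ∈ A, and g(x) = Bd_X^κ(A) if x ∈ X \ A, is a weakly continuous retraction. -/
/-- The boundary of `A` in `X`: points of `A` adjacent to a point of `X \ A`. -/
def Bd {α : Type*} (adj : α → α → Prop) (A : Set α) : Set α :=
  {a | a ∈ A ∧ ∃ b, b ∉ A ∧ adj b a}

/-! Splitting on whether adjacent `x`, `x'` lie in `A`, every case is immediate except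
`x, x' ∉ A`: then `g x = g x' = Bd κ A`, which is nonempty because a walk from outside into `A`
enters `A` at a boundary point. -/

theorem Nat.exists_lt_not_and_succ {p : ℕ → Prop} {m : ℕ} (h0 : ¬ p 0) (hm : p m) :
    ∃ i < m, ¬ p i ∧ p (i + 1) := by
  induction m with
  | zero => exact absurd hm h0
  | succ m ih =>
    by_cases hpm : p m
    · obtain ⟨i, him, hi⟩ := ih hpm
      exact ⟨i, by omega, hi⟩
    · exact ⟨m, lt_add_one m, hpm, hm⟩

theorem adjSets_of_mem_of_mem {α : Type*} {adj : α → α → Prop} {B C : Set α} {a : α}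
    (hB : a ∈ B) (hC : a ∈ C) : AdjSets adj B C :=
  ⟨a, hB, a, hC, Or.inl rfl⟩

theorem Bd_subset {α : Type*} (adj : α → α → Prop) (A : Set α) : Bd adj A ⊆ A :=
  fun _ ha => ha.1

theorem Bd_nonempty_of_connectedIn_univ {α : Type*} {adj : α → α → Prop} {A : Set α}
    (hconn : ConnectedIn adj Set.univ) (hA : A.Nonempty) {x : α} (hx : x ∉ A) :
    (Bd adj A).Nonempty := by
  obtain ⟨a, ha⟩ := hA
  obtain ⟨m, y, hy0, hym, -, hadj⟩ := hconn x (Set.mem_univ x) a (Set.mem_univ a)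
  obtain ⟨i, him, hyi, hyi'⟩ :=
    Nat.exists_lt_not_and_succ (p := fun i => y i ∈ A) (by rwa [hy0]) (by rwa [hym])
  exact ⟨y (i + 1), hyi', y i, hyi, hadj i him⟩

theorem boundary_weakly_continuous_retraction_general {X : Type*}
    (κ : X → X → Prop) (hκs : Symmetric κ)
    (hconn : ConnectedIn κ (Set.univ : Set X))
    (A : Set X) (hA : A.Nonempty)
    (g : X → Set X)
    (hgA : ∀ x ∈ A, g x = {x})
    (hgX : ∀ x ∉ A, g x = Bd κ A) :
    (∀ x, g x ⊆ A) ∧ (∀ a ∈ A, g a = {a}) ∧ WeaklyContinuous κ κ g := by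
  have hgsub : ∀ x, g x ⊆ A := fun x => by
    by_cases hx : x ∈ A
    · simpa [hgA x hx] using hx
    · exact hgX x hx ▸ Bd_subset κ A
  refine ⟨hgsub, hgA, fun x x' hxx' => ?_⟩
  by_cases hx : x ∈ A <;> by_cases hx' : x' ∈ A
  · exact ⟨x, by simp [hgA x hx], x', by simp [hgA x' hx'], Or.inr hxx'⟩
  · exact adjSets_of_mem_of_mem (a := x) (by simp [hgA x hx])
      (hgX x' hx' ▸ ⟨hx, x', hx', hκs hxx'⟩)
  · exact adjSets_of_mem_of_mem (a := x') (hgX x hx ▸ ⟨hx', x, hx, hxx'⟩)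
      (by simp [hgA x' hx'])
  · obtain ⟨b, hb⟩ := Bd_nonempty_of_connectedIn_univ hconn hA hx
    exact adjSets_of_mem_of_mem (hgX x hx ▸ hb) (hgX x' hx' ▸ hb)

/-- in a connected digital image `(X,κ)` with `∅ ≠ A ⊆ X`, the multivalued
function `g(x) = {x}` for `x ∈ A` and `g(x) = Bd_X^κ(A)` for `x ∉ A` is a weakly
continuous retraction `X ⊸ A`. -/
theorem boundary_weakly_continuous_retraction {X : Type*}
    (κ : X → X → Prop) (hκs : Symmetric κ) (hκi : Irreflexive κ)
    (hconn : ConnectedIn κ (Set.univ : Set X))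
    (A : Set X) (hA : A.Nonempty)
    (g : X → Set X)
    (hgA : ∀ x ∈ A, g x = {x})
    (hgX : ∀ x ∉ A, g x = Bd κ A) :
    (∀ x, g x ⊆ A) ∧ (∀ a ∈ A, g a = {a}) ∧ WeaklyContinuous κ κ g :=
  boundary_weakly_continuous_retraction_general κ hκs hconn A hA g hgA hgX
end

section
/- Let X₀ be a nonempty subset of a digital image (X,κ), and let F : (X₀,κ) ⊸ (Y,λ) be a weakly continuous multivalued function with F(x) nonempty for every x ∈ X₀. Then the multivalued function F' : X ⊸ Y defined by F'(x) = F(x) for x ∈ X₀ and F'(x) = F(X₀) for x ∈ X \ X₀ is a weakly continuous extension of F. -/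
theorem AdjSets.of_inter_nonempty {α : Type*} {adj : α → α → Prop} {A B : Set α}
    (h : (A ∩ B).Nonempty) : AdjSets adj A B :=
  let ⟨y, hyA, hyB⟩ := h
  ⟨y, hyA, y, hyB, Or.inl rfl⟩

theorem subset_mImage {α β : Type*} {F : α → Set β} {A : Set α} {x : α} (hx : x ∈ A) :
    F x ⊆ mImage F A :=
  Set.subset_biUnion_of_mem hx

theorem mImage_nonempty {α β : Type*} {F : α → Set β} {A : Set α} (hA : A.Nonempty)
    (hF : ∀ x ∈ A, (F x).Nonempty) : (mImage F A).Nonempty :=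
  let ⟨x, hx⟩ := hA
  (hF x hx).mono (subset_mImage hx)

-- Every value of `F'` is a nonempty subset of `F(X₀)`, and off `X₀` it is all of `F(X₀)`;
-- so when one of two adjacent points lies outside `X₀`, their values intersect.
theorem weakly_continuous_extension_general {X Y : Type*}
    (κ : X → X → Prop) (lam : Y → Y → Prop)
    (X₀ : Set X) (hX₀ : X₀.Nonempty)
    (F : X → Set Y)
    (hFne : ∀ x ∈ X₀, (F x).Nonempty)
    (hFw : ∀ x ∈ X₀, ∀ x' ∈ X₀, κ x x' → AdjSets lam (F x) (F x'))
    (F' : X → Set Y)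
    (hF'in : ∀ x ∈ X₀, F' x = F x)
    (hF'out : ∀ x ∉ X₀, F' x = mImage F X₀) :
    (∀ x ∈ X₀, F' x = F x) ∧ WeaklyContinuous κ lam F' := by
  refine ⟨hF'in, fun x x' hxx' => ?_⟩
  have hF'_nonempty_subset : ∀ z, (F' z).Nonempty ∧ F' z ⊆ mImage F X₀ := by
    intro z
    by_cases hz : z ∈ X₀
    · rw [hF'in z hz]
      exact ⟨hFne z hz, subset_mImage hz⟩
    · rw [hF'out z hz]
      exact ⟨mImage_nonempty hX₀ hFne, subset_rfl⟩
  by_cases hx : x ∈ X₀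
  by_cases hx' : x' ∈ X₀
  · rw [hF'in x hx, hF'in x' hx']
    exact hFw x hx x' hx' hxx'
  · apply AdjSets.of_inter_nonempty
    rw [hF'out x' hx', Set.inter_eq_left.2 (hF'_nonempty_subset x).2]
    exact (hF'_nonempty_subset x).1
  · apply AdjSets.of_inter_nonempty
    rw [hF'out x hx, Set.inter_eq_right.2 (hF'_nonempty_subset x').2]
    exact (hF'_nonempty_subset x').1

/-- a weakly continuous multivalued function `F : (X₀,κ) ⊸ (Y,λ)` with
nonempty point images extends to the weakly continuous multivalued function
`F' : X ⊸ Y` with `F'(x) = F(x)` for `x ∈ X₀` and `F'(x) = F(X₀)` otherwise. -/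
theorem weakly_continuous_extension {X Y : Type*}
    (κ : X → X → Prop) (lam : Y → Y → Prop)
    (hκs : Symmetric κ) (hκi : Irreflexive κ)
    (hls : Symmetric lam) (hli : Irreflexive lam)
    (X₀ : Set X) (hX₀ : X₀.Nonempty)
    (F : X → Set Y)
    (hFne : ∀ x ∈ X₀, (F x).Nonempty)
    (hFw : ∀ x ∈ X₀, ∀ x' ∈ X₀, κ x x' → AdjSets lam (F x) (F x'))
    (F' : X → Set Y)
    (hF'in : ∀ x ∈ X₀, F' x = F x)
    (hF'out : ∀ x ∉ X₀, F' x = mImage F X₀) :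
    (∀ x ∈ X₀, F' x = F x) ∧ WeaklyContinuous κ lam F' :=
  weakly_continuous_extension_general κ lam X₀ hX₀ F hFne hFw F' hF'in hF'out
end

section
/- Let X₀ be a nonempty subset of a digital image (X,κ). If X₀ is κ-connected, or if Bd_X^κ(X₀) is κ-connected, then X₀ is a connectivity preserving multivalued retract of X; that is, there exists a connectivity preserving multivalued function R : X ⊸ X₀ with R(a) = {a} for all a ∈ X₀. -/
/-!
Fix the points of `X₀` and send every other point to one connected set `S ⊆ X₀` containing
`Bd κ X₀`: `X₀` itself or its boundary. A path in `X` passes between `X₀` and its complement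
only through boundary points, which lie in `S`, so each step of the path is matched in the image
either by an adjacency inside `X₀` or by a path inside `S`.
-/

section

open Relation

variable {α β : Type*}

abbrev ChainIn (adj : α → α → Prop) (A : Set α) : α → α → Prop :=
  ReflTransGen fun u v => u ∈ A ∧ v ∈ A ∧ adj u v

theorem ChainIn.mono {adj : α → α → Prop} {A B : Set α} (hAB : A ⊆ B) {a b : α}
    (h : ChainIn adj A a b) : ChainIn adj B a b :=
  ReflTransGen.mono (fun _ _ ⟨hu, hv, huv⟩ => ⟨hAB hu, hAB hv, huv⟩) _ _ h

theorem chainIn_of_path {adj : α → α → Prop} {A : Set α} {m : ℕ} {y : ℕ → α}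
    (hy : ∀ i ≤ m, y i ∈ A) (hadj : ∀ i < m, adj (y i) (y (i + 1))) :
    ChainIn adj A (y 0) (y m) := by
  induction m with
  | zero => exact .refl
  | succ m ih =>
    exact (ih (fun i hi => hy i (by omega)) (fun i hi => hadj i (by omega))).tail
      ⟨hy m (by omega), hy (m + 1) le_rfl, hadj m (by omega)⟩

theorem exists_path_of_chainIn {adj : α → α → Prop} {A : Set α} {a b : α} (hb : b ∈ A)
    (h : ChainIn adj A a b) :
    ∃ (m : ℕ) (y : ℕ → α), y 0 = a ∧ y m = b ∧
      (∀ i ≤ m, y i ∈ A) ∧ ∀ i < m, adj (y i) (y (i + 1)) := by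
  induction h using ReflTransGen.head_induction_on with
  | refl => exact ⟨0, fun _ => b, rfl, rfl, fun _ _ => hb, fun _ hi => absurd hi (by omega)⟩
  | @head a c hac _ ih =>
    obtain ⟨ha, -, hac⟩ := hac
    obtain ⟨m, y, rfl, hym, hy, hadj⟩ := ih
    refine ⟨m + 1, fun | 0 => a | i + 1 => y i, rfl, hym, ?_, ?_⟩
    · rintro (_ | i) hi
      exacts [ha, hy i (by omega)]
    · rintro (_ | i) hi
      exacts [hac, hadj i (by omega)]

theorem connectedIn_iff_chainIn {adj : α → α → Prop} {A : Set α} :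
    ConnectedIn adj A ↔ ∀ a ∈ A, ∀ b ∈ A, ChainIn adj A a b := by
  refine ⟨fun h a ha b hb => ?_, fun h a ha b hb => exists_path_of_chainIn hb (h a ha b hb)⟩
  obtain ⟨m, y, rfl, rfl, hy, hadj⟩ := h a ha b hb
  exact chainIn_of_path hy hadj

theorem connectedIn_singleton (adj : α → α → Prop) (a : α) : ConnectedIn adj {a} :=
  connectedIn_iff_chainIn.2 <| by rintro _ rfl _ rfl; exact .refl

theorem connPreserving_of_chainIn_step {adjX : α → α → Prop} {adjY : β → β → Prop}
    {F : α → Set β} (hF : ∀ x, ConnectedIn adjY (F x))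
    (hstep : ∀ b c, adjX b c → ∀ q ∈ F c, ∃ r ∈ F b, ChainIn adjY (F b ∪ F c) r q) :
    ConnPreserving adjX adjY F := by
  intro A hA
  have hsub : ∀ x ∈ A, F x ⊆ mImage F A := fun x hx => Set.subset_biUnion_of_mem (u := F) hx
  have hlift : ∀ x ∈ A, ∀ x', ChainIn adjX A x x' →
      ∀ p ∈ F x, ∀ q ∈ F x', ChainIn adjY (mImage F A) p q := by
    intro x hx x' h
    induction h with
    | refl =>
      exact fun p hp q hq => (connectedIn_iff_chainIn.1 (hF x) p hp q hq).mono (hsub x hx)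
    | @tail b c _ hbc ih =>
      obtain ⟨hb, hc, hbc⟩ := hbc
      intro p hp q hq
      obtain ⟨r, hr, hrq⟩ := hstep b c hbc q hq
      exact (ih p hp r hr).trans (hrq.mono (Set.union_subset (hsub b hb) (hsub c hc)))
  rw [connectedIn_iff_chainIn] at hA ⊢
  intro p hp q hq
  obtain ⟨x, hx, hpx⟩ := Set.mem_iUnion₂.1 hp
  obtain ⟨x', hx', hqx⟩ := Set.mem_iUnion₂.1 hq
  exact hlift x hx x' (hA x hx x' hx') p hpx q hqx

open Classical in
noncomputable def collapseTo (X₀ S : Set α) (x : α) : Set α :=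
  if x ∈ X₀ then {x} else S

theorem collapseTo_of_mem {X₀ S : Set α} {x : α} (hx : x ∈ X₀) : collapseTo X₀ S x = {x} :=
  if_pos hx

theorem collapseTo_of_notMem {X₀ S : Set α} {x : α} (hx : x ∉ X₀) : collapseTo X₀ S x = S :=
  if_neg hx

theorem collapseTo_subset {X₀ S : Set α} (hS : S ⊆ X₀) (x : α) : collapseTo X₀ S x ⊆ X₀ := by
  by_cases hx : x ∈ X₀
  · simpa [collapseTo_of_mem hx]
  · rwa [collapseTo_of_notMem hx]

theorem connPreserving_collapseTo {κ : α → α → Prop} [Std.Symm κ] {X₀ S : Set α}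
    (hS : ConnectedIn κ S) (hBd : Bd κ X₀ ⊆ S) : ConnPreserving κ κ (collapseTo X₀ S) := by
  refine connPreserving_of_chainIn_step (fun x => ?_) fun b c hbc q hq => ?_
  · by_cases hx : x ∈ X₀
    · simpa only [collapseTo_of_mem hx] using connectedIn_singleton κ x
    · rwa [collapseTo_of_notMem hx]
  by_cases hb : b ∈ X₀ <;> by_cases hc : c ∈ X₀
  · rw [collapseTo_of_mem hc, Set.mem_singleton_iff] at hq
    subst hq
    rw [collapseTo_of_mem hb, collapseTo_of_mem hc]
    exact ⟨b, rfl, .single ⟨.inl rfl, .inr rfl, hbc⟩⟩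
  · rw [collapseTo_of_notMem hc] at hq
    rw [collapseTo_of_mem hb, collapseTo_of_notMem hc]
    have hbS : b ∈ S := hBd ⟨hb, c, hc, symm_of κ hbc⟩
    exact ⟨b, rfl, (connectedIn_iff_chainIn.1 hS b hbS q hq).mono Set.subset_union_right⟩
  · rw [collapseTo_of_mem hc, Set.mem_singleton_iff] at hq
    subst hq
    rw [collapseTo_of_notMem hb]
    exact ⟨q, hBd ⟨hc, b, hb, hbc⟩, .refl⟩
  · rw [collapseTo_of_notMem hc] at hq
    rw [collapseTo_of_notMem hb]
    exact ⟨q, hq, .refl⟩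

end

theorem connectivity_preserving_multivalued_retract_general {X : Type*}
    (κ : X → X → Prop) (hκs : Symmetric κ)
    (X₀ : Set X)
    (hcase : ConnectedIn κ X₀ ∨ ConnectedIn κ (Bd κ X₀)) :
    ∃ R : X → Set X,
      (∀ x, R x ⊆ X₀) ∧ (∀ a ∈ X₀, R a = {a}) ∧ ConnPreserving κ κ R := by
  obtain ⟨S, hSX₀, hBdS, hS⟩ : ∃ S ⊆ X₀, Bd κ X₀ ⊆ S ∧ ConnectedIn κ S := by
    rcases hcase with h | h
    · exact ⟨X₀, subset_rfl, fun _ ha => ha.1, h⟩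
    · exact ⟨Bd κ X₀, fun _ ha => ha.1, subset_rfl, h⟩
  have : Std.Symm κ := ⟨hκs⟩
  exact ⟨collapseTo X₀ S, collapseTo_subset hSX₀, fun _ => collapseTo_of_mem,
    connPreserving_collapseTo hS hBdS⟩

/-- if `∅ ≠ X₀ ⊆ X` and `X₀` is connected or `Bd_X^κ(X₀)` is connected,
then `X₀` is a connectivity preserving multivalued retract of `X`. -/
theorem connectivity_preserving_multivalued_retract {X : Type*}
    (κ : X → X → Prop) (hκs : Symmetric κ) (hκi : Irreflexive κ)
    (X₀ : Set X) (hX₀ : X₀.Nonempty)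
    (hcase : ConnectedIn κ X₀ ∨ ConnectedIn κ (Bd κ X₀)) :
    ∃ R : X → Set X,
      (∀ x, R x ⊆ X₀) ∧ (∀ a ∈ X₀, R a = {a}) ∧ ConnPreserving κ κ R :=
  connectivity_preserving_multivalued_retract_general κ hκs X₀ hcase
end

section
/- Let (W,κ) = (X,κ) ∧ (X',κ) be a wedge with X ∩ X' = {x₀}, and let A ⊆ W. Then A is κ-connected if and only if A ∩ X and A ∩ X' are both κ-connected and, in case both A ∩ (X \ {x₀}) and A ∩ (X' \ {x₀}) are nonempty, x₀ ∈ A. -/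
/-!
The retraction of `W` onto `X` that collapses `X'` to `x₀` sends adjacent points to adjacent
or equal ones, because only `x₀` in `X` can be adjacent to a point outside `X`. Hence it carries
a path in `A` between two points of `A ∩ X` to one in `A ∩ X`, and a path from `X \ {x₀}` to
`X' \ {x₀}` has to pass through `x₀`. Conversely, `A ∩ X` and `A ∩ X'` cover `A`, and when
neither lies inside the other they are glued together at `x₀ ∈ A`.
-/

open Relation Set

section Connectivity

variable {α : Type*} {adj : α → α → Prop} {A B : Set α} {a b x : α}

def AdjWithin (adj : α → α → Prop) (A : Set α) (u v : α) : Prop :=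
  u ∈ A ∧ v ∈ A ∧ adj u v

theorem ConnectedIn.reflTransGen (hA : ConnectedIn adj A) (ha : a ∈ A) (hb : b ∈ A) :
    ReflTransGen (AdjWithin adj A) a b := by
  obtain ⟨m, y, rfl, rfl, hmem, hadj⟩ := hA a ha b hb
  have hprefix : ∀ k ≤ m, ReflTransGen (AdjWithin adj A) (y 0) (y k) := by
    intro k
    induction k with
    | zero => exact fun _ => .refl
    | succ k ih =>
      exact fun hk => (ih (by omega)).tail ⟨hmem k (by omega), hmem (k + 1) hk, hadj k hk⟩
  exact hprefix m le_rfl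

theorem exists_path_of_reflTransGen (h : ReflTransGen (AdjWithin adj A) a b) (ha : a ∈ A) :
    ∃ (m : ℕ) (y : ℕ → α), y 0 = a ∧ y m = b ∧
      (∀ i ≤ m, y i ∈ A) ∧ ∀ i < m, adj (y i) (y (i + 1)) := by
  induction h with
  | refl =>
    exact ⟨0, fun _ => a, rfl, rfl, fun _ _ => ha, fun _ hi => absurd hi (Nat.not_lt_zero _)⟩
  | @tail p q _ hpq ih =>
    obtain ⟨m, y, h0, rfl, hmem, hadj⟩ := ih
    refine ⟨m + 1, fun i => if i ≤ m then y i else q, by simp [h0], by simp, ?_, ?_⟩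
    · intro i _
      by_cases hi : i ≤ m
      · simpa [hi] using hmem i hi
      · simpa [hi] using hpq.2.1
    · intro i hi
      by_cases hi' : i < m
      · simpa [hi'.le, Nat.succ_le_of_lt hi'] using hadj i hi'
      · obtain rfl : i = m := by omega
        simpa using hpq.2.2

theorem connectedIn_of_reflTransGen
    (h : ∀ a ∈ A, ∀ b ∈ A, ReflTransGen (AdjWithin adj A) a b) : ConnectedIn adj A :=
  fun a ha b hb => exists_path_of_reflTransGen (h a ha b hb) ha

theorem AdjWithin.reflTransGen_mono (hAB : A ⊆ B) :
    ReflTransGen (AdjWithin adj A) a b → ReflTransGen (AdjWithin adj B) a b :=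
  ReflTransGen.mono (fun _ _ ⟨hu, hv, huv⟩ => ⟨hAB hu, hAB hv, huv⟩) _ _

theorem ConnectedIn.union (hA : ConnectedIn adj A) (hB : ConnectedIn adj B)
    (hxA : x ∈ A) (hxB : x ∈ B) : ConnectedIn adj (A ∪ B) := by
  have hx : ∀ a ∈ A ∪ B, ReflTransGen (AdjWithin adj (A ∪ B)) a x ∧
      ReflTransGen (AdjWithin adj (A ∪ B)) x a := by
    rintro a (ha | ha)
    · exact ⟨AdjWithin.reflTransGen_mono subset_union_left (hA.reflTransGen ha hxA),
        AdjWithin.reflTransGen_mono subset_union_left (hA.reflTransGen hxA ha)⟩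
    · exact ⟨AdjWithin.reflTransGen_mono subset_union_right (hB.reflTransGen ha hxB),
        AdjWithin.reflTransGen_mono subset_union_right (hB.reflTransGen hxB ha)⟩
  exact connectedIn_of_reflTransGen fun a ha b hb => (hx a ha).1.trans (hx b hb).2

theorem ConnectedIn.exists_adj_of_mem_of_notMem (hA : ConnectedIn adj A) (ha : a ∈ A)
    (haB : a ∈ B) (hb : b ∈ A) (hbB : b ∉ B) : ∃ u ∈ A ∩ B, ∃ v ∉ B, adj u v := by
  have hab := hA.reflTransGen ha hb
  clear hb
  induction hab with
  | refl => exact absurd haB hbB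
  | @tail p q _ hpq ih =>
    by_cases hp : p ∈ B
    · exact ⟨p, ⟨hpq.1, hp⟩, q, hbB, hpq.2.2⟩
    · exact ih hp

end Connectivity

structure IsWedge {W : Type*} (κ : W → W → Prop) (X X' : Set W) (x₀ : W) : Prop where
  union_eq : X ∪ X' = univ
  inter_eq : X ∩ X' = {x₀}
  not_adj : ∀ a ∈ X, ∀ b ∈ X', a ≠ x₀ → b ≠ x₀ → ¬ κ a b

namespace IsWedge

variable {W : Type*} {κ : W → W → Prop} {X X' A : Set W} {x₀ u v : W}

theorem symm (hW : IsWedge κ X X' x₀) (hκ : Symmetric κ) : IsWedge κ X' X x₀ :=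
  ⟨by rw [union_comm, hW.union_eq], by rw [inter_comm, hW.inter_eq],
    fun a ha b hb ha₀ hb₀ hab => hW.not_adj b hb a ha hb₀ ha₀ (hκ hab)⟩

theorem mem_left (hW : IsWedge κ X X' x₀) : x₀ ∈ X :=
  (hW.inter_eq.symm ▸ mem_singleton x₀ : x₀ ∈ X ∩ X').1

theorem mem_right (hW : IsWedge κ X X' x₀) : x₀ ∈ X' :=
  (hW.inter_eq.symm ▸ mem_singleton x₀ : x₀ ∈ X ∩ X').2

theorem diff_singleton_eq_compl (hW : IsWedge κ X X' x₀) : X' \ {x₀} = Xᶜ := by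
  rw [← hW.inter_eq, sdiff_inter_self_eq_sdiff, ← union_sdiff_left, hW.union_eq,
    compl_eq_univ_sdiff]

theorem subset_left_of_not_nonempty (hW : IsWedge κ X X' x₀)
    (h : ¬(A ∩ (X' \ {x₀})).Nonempty) : A ⊆ X := by
  rwa [hW.diff_singleton_eq_compl, not_nonempty_iff_eq_empty, ← sdiff_eq, sdiff_eq_empty] at h

theorem eq_of_adj (hW : IsWedge κ X X' x₀) (hu : u ∈ X) (hv : v ∉ X) (huv : κ u v) :
    u = x₀ := by
  have hv' : v ∈ X' \ {x₀} := hW.diff_singleton_eq_compl ▸ hv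
  by_contra hu₀
  exact hW.not_adj u hu v hv'.1 hu₀ hv'.2 huv

theorem mem_of_connectedIn (hW : IsWedge κ X X' x₀) (hA : ConnectedIn κ A)
    (h₁ : (A ∩ (X \ {x₀})).Nonempty) (h₂ : (A ∩ (X' \ {x₀})).Nonempty) : x₀ ∈ A := by
  obtain ⟨a, ha, haX, -⟩ := h₁
  obtain ⟨b, hb, hbX⟩ := h₂
  rw [hW.diff_singleton_eq_compl] at hbX
  obtain ⟨u, ⟨hu, huX⟩, v, hvX, huv⟩ := hA.exists_adj_of_mem_of_notMem ha haX hb hbX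
  exact hW.eq_of_adj huX hvX huv ▸ hu

theorem connectedIn_inter_left (hW : IsWedge κ X X' x₀) (hκ : Symmetric κ)
    (hA : ConnectedIn κ A) : ConnectedIn κ (A ∩ X) := by
  classical
  let r : W → W := fun w => if w ∈ X then w else x₀
  have hr : ∀ u v, AdjWithin κ A u v → ReflTransGen (AdjWithin κ (A ∩ X)) (r u) (r v) := by
    rintro u v ⟨hu, hv, huv⟩
    by_cases huX : u ∈ X <;> by_cases hvX : v ∈ X <;> simp only [r, huX, hvX, if_true, if_false]
    · exact .single ⟨⟨hu, huX⟩, ⟨hv, hvX⟩, huv⟩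
    · rw [hW.eq_of_adj huX hvX huv]
    · rw [hW.eq_of_adj hvX huX (hκ huv)]
    · rfl
  refine connectedIn_of_reflTransGen fun a ha b hb => ?_
  simpa [Function.onFun, r, ha.2, hb.2] using
    ReflTransGen.lift' r hr _ _ (hA.reflTransGen ha.1 hb.1)

end IsWedge

theorem connected_in_wedge_iff_general {W : Type*}
    (κ : W → W → Prop) (hκs : Symmetric κ)
    (X X' : Set W) (x₀ : W)
    (hunion : X ∪ X' = Set.univ)
    (hinter : X ∩ X' = {x₀})
    (hwedge : ∀ a ∈ X, ∀ b ∈ X', a ≠ x₀ → b ≠ x₀ → ¬ κ a b)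
    (A : Set W) :
    ConnectedIn κ A ↔
      ConnectedIn κ (A ∩ X) ∧ ConnectedIn κ (A ∩ X') ∧
      ((A ∩ (X \ {x₀})).Nonempty → (A ∩ (X' \ {x₀})).Nonempty → x₀ ∈ A) := by
  have hW : IsWedge κ X X' x₀ := ⟨hunion, hinter, hwedge⟩
  refine ⟨fun hA => ⟨hW.connectedIn_inter_left hκs hA,
    (hW.symm hκs).connectedIn_inter_left hκs hA, hW.mem_of_connectedIn hA⟩, ?_⟩
  rintro ⟨hAX, hAX', hx₀⟩
  by_cases h₂ : (A ∩ (X' \ {x₀})).Nonempty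
  · by_cases h₁ : (A ∩ (X \ {x₀})).Nonempty
    · have hA := hAX.union hAX' ⟨hx₀ h₁ h₂, hW.mem_left⟩ ⟨hx₀ h₁ h₂, hW.mem_right⟩
      rwa [← inter_union_distrib_left, hunion, inter_univ] at hA
    · rwa [inter_eq_left.mpr ((hW.symm hκs).subset_left_of_not_nonempty h₁)] at hAX'
  · rwa [inter_eq_left.mpr (hW.subset_left_of_not_nonempty h₂)] at hAX

/-- in a wedge `(W,κ) = (X,κ) ∧ (X',κ)` with `X ∩ X' = {x₀}`, a subset
`A ⊆ W` is connected iff `A ∩ X` and `A ∩ X'` are connected and, when both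
`A ∩ (X \ {x₀})` and `A ∩ (X' \ {x₀})` are nonempty, `x₀ ∈ A`. -/
theorem connected_in_wedge_iff {W : Type*}
    (κ : W → W → Prop) (hκs : Symmetric κ) (hκi : Irreflexive κ)
    (X X' : Set W) (x₀ : W)
    (hunion : X ∪ X' = Set.univ)
    (hinter : X ∩ X' = {x₀})
    (hwedge : ∀ a ∈ X, ∀ b ∈ X', a ≠ x₀ → b ≠ x₀ → ¬ κ a b)
    (A : Set W) :
    ConnectedIn κ A ↔
      ConnectedIn κ (A ∩ X) ∧ ConnectedIn κ (A ∩ X') ∧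
      ((A ∩ (X \ {x₀})).Nonempty → (A ∩ (X' \ {x₀})).Nonempty → x₀ ∈ A) :=
  connected_in_wedge_iff_general κ hκs X X' x₀ hunion hinter hwedge A
end

section
/- Let (X,κ) ∧ (X',κ) be a wedge with X ∩ X' = {x₀} and let (Y,λ) ∧ (Y',λ) be a wedge with Y ∩ Y' = {y₀}. Let F : (X,κ) ⊸ (Y,λ) and F' : (X',κ) ⊸ (Y',λ) be multivalued functions with F(x₀) = {y₀} = F'(x₀). If F and F' are both weakly continuous, then F ∧ F' : X ∧ X' ⊸ Y ∧ Y' is weakly continuous. -/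
/-!
Every adjacency of the wedge `X ∧ X'` lies within `X` or within `X'`: points of different
summands other than `x₀` are not adjacent. On `X` the wedge function agrees with `F`, and on `X'`
with `F'`, also at `x₀` because `F(x₀) = {y₀} = F'(x₀)`; so each adjacency is handled by the weak
continuity of `F` or of `F'`.
-/

def WeaklyContinuousOn {α β : Type*} (adjX : α → α → Prop) (adjY : β → β → Prop)
    (F : α → Set β) (S : Set α) : Prop :=
  ∀ x ∈ S, ∀ x' ∈ S, adjX x x' → AdjSets adjY (F x) (F x')

theorem WeaklyContinuousOn.congr {α β : Type*} {adjX : α → α → Prop} {adjY : β → β → Prop}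
    {F G : α → Set β} {S : Set α} (hF : WeaklyContinuousOn adjX adjY F S)
    (hFG : Set.EqOn F G S) : WeaklyContinuousOn adjX adjY G S := by
  intro x hx x' hx' hadj
  rw [← hFG hx, ← hFG hx']
  exact hF x hx x' hx' hadj

theorem weaklyContinuous_of_adj_within {α β : Type*} {adjX : α → α → Prop}
    {adjY : β → β → Prop} {F : α → Set β} {S T : Set α}
    (hadj : ∀ {x x'}, adjX x x' → (x ∈ S ∧ x' ∈ S) ∨ (x ∈ T ∧ x' ∈ T))
    (hS : WeaklyContinuousOn adjX adjY F S) (hT : WeaklyContinuousOn adjX adjY F T) :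
    WeaklyContinuous adjX adjY F := by
  intro x x' hxx'
  rcases hadj hxx' with ⟨hx, hx'⟩ | ⟨hx, hx'⟩
  · exact hS x hx x' hx' hxx'
  · exact hT x hx x' hx' hxx'

theorem Set.eqOn_of_eqOn_diff_singleton {α β : Type*} {f g : α → β} {S : Set α} {a : α}
    (h : ∀ x ∈ S, x ≠ a → f x = g x) (ha : f a = g a) : Set.EqOn f g S := by
  intro x hx
  by_cases hxa : x = a
  · rw [hxa, ha]
  · exact h x hx hxa

theorem adj_within_wedge_summand {α : Type*} {κ : α → α → Prop} (hκs : Symmetric κ)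
    {X X' : Set α} {x₀ : α} (hunion : X ∪ X' = Set.univ) (hx₀ : x₀ ∈ X ∩ X')
    (hwedge : ∀ a ∈ X, ∀ b ∈ X', a ≠ x₀ → b ≠ x₀ → ¬ κ a b) {x x' : α} (hxx' : κ x x') :
    (x ∈ X ∧ x' ∈ X) ∨ (x ∈ X' ∧ x' ∈ X') := by
  have hmem : ∀ z, z ∈ X ∨ z ∈ X' := Set.eq_univ_iff_forall.mp hunion
  by_cases hx : x = x₀
  · subst hx
    exact (hmem x').imp (⟨hx₀.1, ·⟩) (⟨hx₀.2, ·⟩)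
  by_cases hx' : x' = x₀
  · subst hx'
    exact (hmem x).imp (⟨·, hx₀.1⟩) (⟨·, hx₀.2⟩)
  rcases hmem x with hxX | hxX' <;> rcases hmem x' with hx'X | hx'X'
  · exact .inl ⟨hxX, hx'X⟩
  · exact absurd hxx' (hwedge x hxX x' hx'X' hx hx')
  · exact absurd (hκs hxx') (hwedge x' hx'X x hxX' hx' hx)
  · exact .inr ⟨hxX', hx'X'⟩

theorem wedge_weakly_continuous_general {W Z : Type*}
    (κ : W → W → Prop) (lam : Z → Z → Prop)
    (hκs : Symmetric κ)
    -- `(W,κ) = (X,κ) ∧ (X',κ)` is a wedge with `X ∩ X' = {x₀}`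
    (X X' : Set W) (x₀ : W)
    (hXunion : X ∪ X' = Set.univ) (hXinter : X ∩ X' = {x₀})
    (hXwedge : ∀ a ∈ X, ∀ b ∈ X', a ≠ x₀ → b ≠ x₀ → ¬ κ a b)
    (y₀ : Z)
    -- `F : X ⊸ Y` and `G : X' ⊸ Y'` with `F(x₀) = {y₀} = G(x₀)`
    (F G : W → Set Z)
    (hFx₀ : F x₀ = {y₀}) (hGx₀ : G x₀ = {y₀})
    -- `F` and `G` are weakly continuous
    (hFw : ∀ x ∈ X, ∀ x' ∈ X, κ x x' → AdjSets lam (F x) (F x'))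
    (hGw : ∀ x ∈ X', ∀ x' ∈ X', κ x x' → AdjSets lam (G x) (G x'))
    -- `H = F ∧ G` is the wedge function
    (H : W → Set Z)
    (hHF : ∀ a ∈ X, a ≠ x₀ → H a = F a)
    (hHG : ∀ a ∈ X', a ≠ x₀ → H a = G a)
    (hHx₀ : H x₀ = {y₀}) :
    WeaklyContinuous κ lam H := by
  have hx₀ : x₀ ∈ X ∩ X' := hXinter ▸ rfl
  have hHX : Set.EqOn F H X := (Set.eqOn_of_eqOn_diff_singleton hHF (hHx₀.trans hFx₀.symm)).symm
  have hHX' : Set.EqOn G H X' :=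
    (Set.eqOn_of_eqOn_diff_singleton hHG (hHx₀.trans hGx₀.symm)).symm
  exact weaklyContinuous_of_adj_within (adj_within_wedge_summand hκs hXunion hx₀ hXwedge)
    (WeaklyContinuousOn.congr hFw hHX) (WeaklyContinuousOn.congr hGw hHX')

/-- the wedge `F ∧ F'` of weakly continuous multivalued functions
`F : (X,κ) ⊸ (Y,λ)`, `F' : (X',κ) ⊸ (Y',λ)` with `F(x₀) = {y₀} = F'(x₀)` is weakly
continuous on the wedge `X ∧ X'`. -/
theorem wedge_weakly_continuous {W Z : Type*}
    (κ : W → W → Prop) (lam : Z → Z → Prop)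
    (hκs : Symmetric κ) (hκi : Irreflexive κ)
    (hls : Symmetric lam) (hli : Irreflexive lam)
    -- `(W,κ) = (X,κ) ∧ (X',κ)` is a wedge with `X ∩ X' = {x₀}`
    (X X' : Set W) (x₀ : W)
    (hXunion : X ∪ X' = Set.univ) (hXinter : X ∩ X' = {x₀})
    (hXwedge : ∀ a ∈ X, ∀ b ∈ X', a ≠ x₀ → b ≠ x₀ → ¬ κ a b)
    -- `(Z,λ) = (Y,λ) ∧ (Y',λ)` is a wedge with `Y ∩ Y' = {y₀}`
    (Y Y' : Set Z) (y₀ : Z)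
    (hYunion : Y ∪ Y' = Set.univ) (hYinter : Y ∩ Y' = {y₀})
    (hYwedge : ∀ a ∈ Y, ∀ b ∈ Y', a ≠ y₀ → b ≠ y₀ → ¬ lam a b)
    -- `F : X ⊸ Y` and `G : X' ⊸ Y'` with `F(x₀) = {y₀} = G(x₀)`
    (F G : W → Set Z)
    (hFY : ∀ x ∈ X, F x ⊆ Y) (hGY : ∀ x ∈ X', G x ⊆ Y')
    (hFx₀ : F x₀ = {y₀}) (hGx₀ : G x₀ = {y₀})
    -- `F` and `G` are weakly continuous
    (hFw : ∀ x ∈ X, ∀ x' ∈ X, κ x x' → AdjSets lam (F x) (F x'))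
    (hGw : ∀ x ∈ X', ∀ x' ∈ X', κ x x' → AdjSets lam (G x) (G x'))
    -- `H = F ∧ G` is the wedge function
    (H : W → Set Z)
    (hHF : ∀ a ∈ X, a ≠ x₀ → H a = F a)
    (hHG : ∀ a ∈ X', a ≠ x₀ → H a = G a)
    (hHx₀ : H x₀ = {y₀}) :
    WeaklyContinuous κ lam H :=
  wedge_weakly_continuous_general κ lam hκs X X' x₀ hXunion hXinter hXwedge y₀ F G hFx₀ hGx₀ hFw hGw
    H hHF hHG hHx₀
end
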